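/- For all words R, S, T over the alphabet {D,U}, the folding convolution is associative: (R*S)*T = R*(S*T). -/

import Mathlib

open scoped Classical

/-- Letters of the folding alphabet {D, U}. -/
inductive FoldLetter : Type
  | D : FoldLetter
  | U : FoldLetter
deriving DecidableEq

/-- Words over {D, U}. -/
abbrev FWord := List FoldLetter

/-- The letter morphism μ swapping D and U. -/
def mir : FoldLetter → FoldLetter
  | .D => .U
  | .U => .D

/-- S̄ = μ(τ(S)): reverse the word and swap D and U. -/
def fbar (S : FWord) : FWord := (S.reverse).map mir

/-- The folding convolution S * T. -/
def conv (S : FWord) : FWord → FWord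
  | [] => S
  | b :: T => S ++ b :: conv (fbar S) T

/-- A fold string: a nonempty word over {D,U} starting with D. -/
def IsFoldString (S : FWord) : Prop := S ≠ [] ∧ S.head? = some FoldLetter.D

/-- The alphabet A = {a,b,c,d}, encoded as ZMod 4 (a = 0, b = 1, c = 2, d = 3),
so that σ is addition of 1 and f is k ↦ i^k. -/
abbrev Alpha := ZMod 4

/-- Words over A. -/
abbrev AWord := List Alpha

/-- w(D) = 1, w(U) = -1. -/
def wInt : FoldLetter → ℤ
  | .D => 1
  | .U => -1

/-- The homomorphism w on words. -/
def wSum (S : FWord) : ℤ := (S.map wInt).sum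

/-- θ_S(a) = e₀ e₁ ⋯ e_{m-1} with e₀ = a and e_i = σ^{w(a₁⋯a_i)}(a). -/
def thetaA (S : FWord) : AWord :=
  (List.range (S.length + 1)).map (fun i => ((wSum (S.take i) : ℤ) : Alpha))

/-- The word operation στ (reverse, then cyclically shift each letter). -/
def st (v : AWord) : AWord := v.reverse.map (· + 1)

/-- θ_S on a letter: θ_S(σ^k(a)) = (στ)^k (θ_S(a)). -/
def thetaL (S : FWord) (e : Alpha) : AWord := st^[e.val] (thetaA S)

/-- The folding morphism θ_S as a monoid endomorphism of A*. -/
def theta (S : FWord) (v : AWord) : AWord := v.flatMap (thetaL S)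

/-- f on letters: f(a) = 1, f(b) = i, f(c) = -1, f(d) = -i. -/
noncomputable def fL : Alpha → ℂ := fun e => Complex.I ^ e.val

/-- The homomorphism f : A* → (ℂ, +). -/
noncomputable def fW (v : AWord) : ℂ := (v.map fL).sum

/-- The k-th point z_k of the curve of a word v. -/
noncomputable def pt (v : AWord) (k : ℕ) : ℂ := fW (v.take k)

/-- The curve of v traverses a segment twice. -/
def TraversesTwice (v : AWord) : Prop :=
  ∃ k l, k < v.length ∧ l < v.length ∧ k ≠ l ∧
    ({pt v k, pt v (k + 1)} : Set ℂ) = ({pt v l, pt v (l + 1)} : Set ℂ)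

/-- The fold string S is self-avoiding. -/
def SelfAvoiding (S : FWord) : Prop :=
  ∀ n : ℕ, 1 ≤ n → ¬ TraversesTwice ((theta S)^[n] [0])

/-- z ∈ ℂ is a Gaussian integer. -/
def IsGaussianInt (z : ℂ) : Prop := ∃ p q : ℤ, z = (p : ℂ) + (q : ℂ) * Complex.I

/-- The number of indices k ∈ {0, …, |v|} with z_k = z (occurrences of z among
the points of the curve of v). -/
noncomputable def countAt (v : AWord) (z : ℂ) : ℕ :=
  ((Finset.range (v.length + 1)).filter (fun k => pt v k = z)).card

/-- The fold string S is planefilling. -/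
def Planefilling (S : FWord) : Prop :=
  ∀ R : ℝ, 0 < R → ∃ n : ℕ, 1 ≤ n ∧ ∃ q : ℂ, IsGaussianInt q ∧
    ∀ z : ℂ, IsGaussianInt z → ‖z - q‖ ≤ R →
      2 ≤ countAt ((theta S)^[n] [0]) z

/-- The word θ_S(abcd), whose curve is the θ-loop of S. -/
def loopWord (S : FWord) : AWord := theta S [0, 1, 2, 3]

/-- The rounding of the closed curve of a word v (all of whose steps are unit
segments and with f(v) = 0), as a subset of ℂ. -/
noncomputable def roundedCurve (v : AWord) : Set ℂ :=
  ⋃ k ∈ Finset.range v.length,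
    (segment ℝ (pt v k + (pt v (k + 1) - pt v k) / 4)
        (pt v (k + 1) - (pt v (k + 1) - pt v k) / 4) ∪
      segment ℝ (pt v (k + 1) - (pt v (k + 1) - pt v k) / 4)
        (pt v ((k + 1) % v.length) +
          (pt v ((k + 1) % v.length + 1) - pt v ((k + 1) % v.length)) / 4))

/-- The number of indices k ∈ {0, …, |v| - 1} with z_k = z (occurrences of z among
the vertices of the closed curve of v). -/
noncomputable def vertexCount (v : AWord) (z : ℂ) : ℕ :=
  ((Finset.range v.length).filter (fun k => pt v k = z)).card

/-- The closed curve of v is maximally simple: it is simple, and every Gaussian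
integer lying in a bounded connected component of the complement of its rounding
occurs exactly twice among its vertices. -/
def MaximallySimple (v : AWord) : Prop :=
  ¬ TraversesTwice v ∧
    ∀ z : ℂ, IsGaussianInt z → z ∉ roundedCurve v →
      Bornology.IsBounded (connectedComponentIn (roundedCurve v)ᶜ z) →
      vertexCount v z = 2

/-- A D-word: letters from {a,c} (even) and {b,d} (odd) alternate. -/
def IsDWord (v : AWord) : Prop :=
  ∀ k (h : k + 1 < v.length),
    (v[k]'(Nat.lt_of_succ_lt h)).val % 2 ≠ (v[k + 1]'h).val % 2

/-- A loop word: a nonempty D-word with f(v) = 0. -/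
def IsLoopWord (v : AWord) : Prop := v ≠ [] ∧ IsDWord v ∧ fW v = 0

/-- The eight square words σᵏ(abcd), σᵏ(adcb), k = 0,1,2,3. -/
def squareWords : List AWord :=
  [[0, 1, 2, 3], [1, 2, 3, 0], [2, 3, 0, 1], [3, 0, 1, 2],
   [0, 3, 2, 1], [1, 0, 3, 2], [2, 1, 0, 3], [3, 2, 1, 0]]

/-- K[v] ⊆ ℂ: the union of the segments of the curve of v. -/
noncomputable def KSet (v : AWord) : Set ℂ :=
  ⋃ k ∈ Finset.range v.length, segment ℝ (pt v k) (pt v (k + 1))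

/-- The number of boundary points of S: Gaussian integers visited exactly once
by the curve of θ_S(a). -/
noncomputable def rCount (S : FWord) : ℕ :=
  ((Finset.range ((thetaA S).length + 1)).filter
    (fun k => countAt (thetaA S) (pt (thetaA S) k) = 1)).card

/-- The k-th point Z_k of the infinite curve of S. -/
noncomputable def Zpt (S : FWord) (k : ℕ) : ℂ := pt ((theta S)^[k] [0]) k

/-- The fold string S is perfect. -/
def IsPerfectFold (S : FWord) : Prop :=
  SelfAvoiding S ∧
    ∀ p q : ℂ, IsGaussianInt p → IsGaussianInt q → ‖p - q‖ = 1 →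
      ∃! jk : Fin 4 × ℕ,
        ({Complex.I ^ (jk.1 : ℕ) * Zpt S jk.2,
          Complex.I ^ (jk.1 : ℕ) * Zpt S (jk.2 + 1)} : Set ℂ) = ({p, q} : Set ℂ)

/-!
Since `fbar` is an involution, the `j`-th block of `R * S` is `fbar^[j] R`. So the convolution
splits at any letter of its second argument, and barring `R * S` reverses its block sequence:
`fbar (R * S) = fbar^[|S| + 1] R * fbar S`. Associativity follows by induction on `T = b :: T'`:
after the letter `b`, the left side continues with `fbar (R * S) * T'`, the right side with
`fbar^[|S| + 1] R * (fbar S * T')`.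
-/

theorem mir_involutive : Function.Involutive mir := by
  intro a; cases a <;> rfl

theorem fbar_involutive : Function.Involutive fbar := by
  intro S
  simp only [fbar, List.map_reverse, List.reverse_reverse, List.map_map,
    mir_involutive.comp_self, List.map_id]

theorem fbar_append (X Y : FWord) : fbar (X ++ Y) = fbar Y ++ fbar X := by
  simp [fbar]

theorem fbar_cons (b : FoldLetter) (S : FWord) : fbar (b :: S) = fbar S ++ [mir b] := by
  simp [fbar]

theorem length_fbar (S : FWord) : (fbar S).length = S.length := by
  simp [fbar]

theorem conv_append (R X Y : FWord) (b : FoldLetter) :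
    conv R (X ++ b :: Y) = conv R X ++ b :: conv (fbar^[X.length + 1] R) Y := by
  induction X generalizing R with
  | nil => rfl
  | cons c X ih =>
    simp only [List.cons_append, conv, ih, List.append_assoc,
      List.length_cons, Function.iterate_succ_apply]

theorem fbar_conv (R S : FWord) :
    fbar (conv R S) = conv (fbar^[S.length + 1] R) (fbar S) := by
  induction S generalizing R with
  | nil => rfl
  | cons b S ih =>
    -- The last block of the right-hand side is `fbar^[2 |S| + 3] R = fbar R`.
    have hlast : fbar^[(fbar S).length + 1] (fbar^[(b :: S).length + 1] R) = fbar R := by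
      rw [← Function.iterate_add_apply, fbar_involutive.iterate_odd ⟨S.length + 1, by
        rw [length_fbar, List.length_cons]; ring⟩]
    rw [conv, fbar_append, fbar_cons, fbar_cons, conv_append, hlast, ih, List.length_cons,
      ← Function.iterate_succ_apply, List.append_assoc, List.singleton_append]
    rfl

/-- The folding convolution is associative. -/
theorem conv_assoc (R S T : FWord) :
    conv (conv R S) T = conv R (conv S T) := by
  induction T generalizing R S with
  | nil => rfl
  | cons b T ih => rw [conv, conv, conv_append, fbar_conv, ih]
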